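/- Let L > 0, p ∈ (0,1), and let s₀ ∈ ℝ satisfy p = 1 − L · ∫_{s₀}^{s₀ + 1/L} Φ(s) ds. Then L · (Φ(s₀ + 1/L) − Φ(s₀)) ≤ φ(Φ⁻¹(p)). -/

import Mathlib

/-!
With `q = Φ⁻¹(p)`, the function `g(t) = φ(t) - q Φ(t)` has derivative `-(t + q) φ(t)`, so it is
maximal at `t = -q`, where `g(-q) = φ(q) - q (1 - p)` by symmetry of `φ`. Averaging `g` over
`[s₀, s₀ + 1/L]` and using that the average of `Φ` there is `1 - p` gives
`L (Φ(s₀ + 1/L) - Φ(s₀)) - q (1 - p) ≤ φ(q) - q (1 - p)`.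
-/

open MeasureTheory Real

/-- Standard normal density `φ`. -/
noncomputable def stdGaussPDF (t : ℝ) : ℝ :=
  (Real.sqrt (2 * π))⁻¹ * Real.exp (-t ^ 2 / 2)

/-- Standard normal cumulative distribution function `Φ`. -/
noncomputable def stdGaussCDF (x : ℝ) : ℝ := ∫ t in Set.Iic x, stdGaussPDF t

/-- Standard normal quantile function `Φ⁻¹`. -/
noncomputable def stdGaussQuantile : ℝ → ℝ := Function.invFun stdGaussCDF

open Filter Set Topology

lemma apply_le_of_hasDerivAt_nonneg_of_nonpos {f f' : ℝ → ℝ} {c : ℝ}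
    (hf : ∀ t, HasDerivAt f (f' t) t) (hleft : ∀ t < c, 0 ≤ f' t)
    (hright : ∀ t, c < t → f' t ≤ 0) (s : ℝ) : f s ≤ f c := by
  have hcont : Continuous f := continuous_iff_continuousAt.mpr fun t => (hf t).continuousAt
  rcases le_total s c with hsc | hcs
  · refine monotoneOn_of_hasDerivWithinAt_nonneg (convex_Iic c) hcont.continuousOn
      (fun t _ => (hf t).hasDerivWithinAt) (fun t ht => hleft t ?_) hsc self_mem_Iic hsc
    rwa [interior_Iic] at ht
  · refine antitoneOn_of_hasDerivWithinAt_nonpos (convex_Ici c) hcont.continuousOn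
      (fun t _ => (hf t).hasDerivWithinAt) (fun t ht => hright t ?_) self_mem_Ici hcs hcs
    rwa [interior_Ici] at ht

lemma stdGaussPDF_eq_gaussianPDFReal : stdGaussPDF = ProbabilityTheory.gaussianPDFReal 0 1 := by
  ext t
  simp [stdGaussPDF, ProbabilityTheory.gaussianPDFReal]

lemma stdGaussPDF_pos (t : ℝ) : 0 < stdGaussPDF t := by
  unfold stdGaussPDF; positivity

lemma stdGaussPDF_neg (t : ℝ) : stdGaussPDF (-t) = stdGaussPDF t := by
  simp [stdGaussPDF]

lemma continuous_stdGaussPDF : Continuous stdGaussPDF := by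
  unfold stdGaussPDF; fun_prop

lemma integrable_stdGaussPDF : Integrable stdGaussPDF := by
  rw [stdGaussPDF_eq_gaussianPDFReal]
  exact ProbabilityTheory.integrable_gaussianPDFReal 0 1

lemma integral_stdGaussPDF : ∫ t, stdGaussPDF t = 1 := by
  rw [stdGaussPDF_eq_gaussianPDFReal]
  exact ProbabilityTheory.integral_gaussianPDFReal_eq_one 0 one_ne_zero

lemma hasDerivAt_stdGaussPDF (t : ℝ) : HasDerivAt stdGaussPDF (-t * stdGaussPDF t) t := by
  have hexponent : HasDerivAt (fun u : ℝ => -u ^ 2 / 2) (-t) t := by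
    exact ((hasDerivAt_pow 2 t).neg.div_const 2).congr_deriv (by ring)
  unfold stdGaussPDF
  exact (hexponent.exp.const_mul _).congr_deriv (by ring)

lemma stdGaussCDF_sub_stdGaussCDF (x y : ℝ) :
    stdGaussCDF y - stdGaussCDF x = ∫ t in x..y, stdGaussPDF t :=
  intervalIntegral.integral_Iic_sub_Iic integrable_stdGaussPDF.integrableOn
    integrable_stdGaussPDF.integrableOn

lemma hasDerivAt_stdGaussCDF (x : ℝ) : HasDerivAt stdGaussCDF (stdGaussPDF x) x := by
  have hΦ : stdGaussCDF = fun u => stdGaussCDF 0 + ∫ t in (0 : ℝ)..u, stdGaussPDF t := by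
    ext u; rw [← stdGaussCDF_sub_stdGaussCDF]; ring
  rw [hΦ]
  exact (intervalIntegral.integral_hasDerivAt_right
    (continuous_stdGaussPDF.intervalIntegrable 0 x)
    (continuous_stdGaussPDF.stronglyMeasurableAtFilter _ _)
    continuous_stdGaussPDF.continuousAt).const_add _

lemma continuous_stdGaussCDF : Continuous stdGaussCDF :=
  continuous_iff_continuousAt.mpr fun x => (hasDerivAt_stdGaussCDF x).continuousAt

lemma stdGaussCDF_neg (x : ℝ) : stdGaussCDF (-x) = 1 - stdGaussCDF x := by
  have hreflect : stdGaussCDF (-x) = ∫ t in Ioi x, stdGaussPDF t := by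
    rw [stdGaussCDF, ← integral_comp_neg_Ioi]
    simp_rw [stdGaussPDF_neg]
  have hsplit := intervalIntegral.integral_Iic_add_Ioi (b := x)
    integrable_stdGaussPDF.integrableOn integrable_stdGaussPDF.integrableOn
  rw [integral_stdGaussPDF] at hsplit
  rw [hreflect, stdGaussCDF]
  linarith

lemma tendsto_stdGaussCDF_atTop : Tendsto stdGaussCDF atTop (𝓝 1) := by
  have hlim := (aecover_Iic (μ := volume) tendsto_id).integral_tendsto_of_countably_generated
    integrable_stdGaussPDF
  rwa [integral_stdGaussPDF] at hlim

lemma tendsto_stdGaussCDF_atBot : Tendsto stdGaussCDF atBot (𝓝 0) := by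
  have hreflect : Tendsto (fun x => 1 - stdGaussCDF (-x)) atBot (𝓝 (1 - 1)) :=
    tendsto_const_nhds.sub (tendsto_stdGaussCDF_atTop.comp tendsto_neg_atBot_atTop)
  simpa [stdGaussCDF_neg] using hreflect

lemma stdGaussCDF_stdGaussQuantile {p : ℝ} (hp : p ∈ Ioo (0 : ℝ) 1) :
    stdGaussCDF (stdGaussQuantile p) = p := by
  refine Function.invFun_eq (mem_range_of_exists_le_of_exists_ge continuous_stdGaussCDF ?_ ?_)
  · exact (tendsto_stdGaussCDF_atBot.eventually (eventually_le_nhds hp.1)).exists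
  · exact (tendsto_stdGaussCDF_atTop.eventually (eventually_ge_nhds hp.2)).exists

lemma stdGaussPDF_add_mul_stdGaussCDF_le (c s : ℝ) :
    stdGaussPDF s + c * stdGaussCDF s ≤ stdGaussPDF c + c * stdGaussCDF c := by
  refine apply_le_of_hasDerivAt_nonneg_of_nonpos (f := fun t => stdGaussPDF t + c * stdGaussCDF t)
    (f' := fun t => (c - t) * stdGaussPDF t)
    (fun t => ?_) (fun t ht => ?_) (fun t ht => ?_) s
  · exact ((hasDerivAt_stdGaussPDF t).add ((hasDerivAt_stdGaussCDF t).const_mul c)).congr_deriv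
      (by ring)
  · exact mul_nonneg (by linarith) (stdGaussPDF_pos t).le
  · exact mul_nonpos_of_nonpos_of_nonneg (by linarith) (stdGaussPDF_pos t).le

lemma stdGaussCDF_sub_add_mul_integral_le (c : ℝ) {a b : ℝ} (hab : a ≤ b) :
    stdGaussCDF b - stdGaussCDF a + c * ∫ s in a..b, stdGaussCDF s
      ≤ (b - a) * (stdGaussPDF c + c * stdGaussCDF c) := by
  have hφ := continuous_stdGaussPDF.intervalIntegrable (μ := volume) a b
  have hΦ := (continuous_stdGaussCDF.intervalIntegrable (μ := volume) a b).const_mul c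
  have hmono := intervalIntegral.integral_mono_on hab (hφ.add hΦ) intervalIntegrable_const
    fun s _ => stdGaussPDF_add_mul_stdGaussCDF_le c s
  rwa [intervalIntegral.integral_add hφ hΦ, intervalIntegral.integral_const_mul,
    ← stdGaussCDF_sub_stdGaussCDF, intervalIntegral.integral_const, smul_eq_mul] at hmono

/-- **The Lipschitz-constrained value is below the unconstrained value.** If `s₀` solves
`p = 1 - L ∫_{s₀}^{s₀+1/L} Φ(s) ds` for `p ∈ (0,1)`, then
`L (Φ(s₀ + 1/L) - Φ(s₀)) ≤ φ(Φ⁻¹(p))`. -/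
theorem constrained_value_le_unconstrained (L p s₀ : ℝ) (hL : 0 < L)
    (hp : p ∈ Set.Ioo (0 : ℝ) 1)
    (hs₀ : p = 1 - L * ∫ s in s₀..(s₀ + 1 / L), stdGaussCDF s) :
    L * (stdGaussCDF (s₀ + 1 / L) - stdGaussCDF s₀)
      ≤ stdGaussPDF (stdGaussQuantile p) := by
  set q := stdGaussQuantile p
  have hΦ : stdGaussCDF (-q) = 1 - p := by rw [stdGaussCDF_neg, stdGaussCDF_stdGaussQuantile hp]
  have hint : L * ∫ s in s₀..(s₀ + 1 / L), stdGaussCDF s = 1 - p := by linarith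
  have hbound := stdGaussCDF_sub_add_mul_integral_le (-q)
    (le_add_of_nonneg_right (one_div_pos.mpr hL).le : s₀ ≤ s₀ + 1 / L)
  rw [hΦ, stdGaussPDF_neg, add_sub_cancel_left] at hbound
  have hscaled := mul_le_mul_of_nonneg_left hbound hL.le
  rw [mul_add, mul_left_comm, hint, ← mul_assoc, mul_one_div_cancel hL.ne', one_mul] at hscaled
  linarith
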